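/- Under the same hypotheses, the lower separation bound holds: (y−x)e^{−At} + (Λ_{x,y}/A)(1−e^{−At}) ≤ c(y,t) − c(x,t), where Λ_{x,y} = ‖K‖_∞²‖K'''‖_∞ max{μ({x})³, μ({y})³}. In particular, characteristic curves never cross, and if x is an atom of μ then c(·,t) has a jump discontinuity at x of size at least (2Λ_{x,x}/A)(1−e^{−At}) > 0 for every t > 0. -/

import Mathlib

/-!
Let `g(t) = c(y,t) - c(x,t)`, `H_p = ∫ K(c_p - c_z) dμ(z)` and
`I_p = ∫_{z ≠ p} K'''(c_p - c_z) dμ(z)`, so that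
`g' = H_y² I_y - H_x² I_x = (H_y² - H_x²) I_x + H_y² (I_y - I_x)`
(or the same with the roles of `x` and `y` exchanged). The first term is `O(g)` because `K` is
Lipschitz. `K'''` is odd with `K'''(0+) = ‖K'''‖_∞`, so the atoms at `x` and `y` give
`I_y - I_x ≥ ‖K'''‖_∞ μ{x,y} - Lip(K''') g`, and `H_p ≥ ‖K‖_∞ μ{p}`. Hence `g' ≥ Λ_{x,y} - A g`,
and Grönwall's inequality gives the bound. Since that bound is uniform in the second point, at an
atom `x` it separates `c(·,t)` on the two sides of `x` by twice `(Λ_{x,x}/A)(1 - e^{-At})`.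
-/

open MeasureTheory

/-- The bi-Helmholtz kernel `K(x) = (1/(4α²))(α+|x|)e^{-|x|/α}`. -/
noncomputable def biHelmholtzK (α : ℝ) (x : ℝ) : ℝ :=
  (1 / (4 * α ^ 2)) * (α + |x|) * Real.exp (-|x| / α)

open Real Set Filter Topology

lemma add_mul_exp_neg_div_le {α : ℝ} (hα : 0 < α) (u : ℝ) : (α + u) * exp (-u / α) ≤ α := by
  have h : α + u ≤ α * exp (u / α) := by
    have := add_one_le_exp (u / α)
    rw [div_add_one hα.ne', div_le_iff₀' hα] at this
    linarith
  calc (α + u) * exp (-u / α) ≤ α * exp (u / α) * exp (-u / α) := by gcongr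
    _ = α := by rw [mul_assoc, ← exp_add, neg_div, add_neg_cancel, exp_zero, mul_one]

lemma nonneg_of_abs_sub_le_mul_abs_sub {g : ℝ → ℝ} {L a b : ℝ} (hab : a ≠ b)
    (h : |g a - g b| ≤ L * |a - b|) : 0 ≤ L :=
  nonneg_of_mul_nonneg_left ((abs_nonneg _).trans h) (abs_pos.mpr (sub_ne_zero.mpr hab))

/-- The algebra behind the separation estimate: `P = H_p`, `Q = H_y² - H_x²`, `J = I_q` and
`D = I_y - I_x`, where `{p, q} = {x, y}`. -/
lemma sub_le_mul_add_sq_mul {M M3 L E c m P Q J D : ℝ} (hM : 0 ≤ M) (hM3 : 0 ≤ M3) (hE : 0 ≤ E)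
    (hc : 0 ≤ c) (hcm : c ≤ m) (hP : M * c ≤ P) (hP' : P ≤ M) (hQ : |Q| ≤ 2 * M * L)
    (hJ : |J| ≤ M3) (hD : M3 * m - E ≤ D) :
    M ^ 2 * M3 * c ^ 3 - (2 * M * L * M3 + M ^ 2 * E) ≤ Q * J + P ^ 2 * D := by
  have hQJ : -(2 * M * L * M3) ≤ Q * J := by
    have := mul_le_mul hQ hJ (abs_nonneg J) ((abs_nonneg Q).trans hQ)
    rw [← abs_mul] at this
    linarith [neg_abs_le (Q * J)]
  have hMc : 0 ≤ M * c := mul_nonneg hM hc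
  have hP2 : (M * c) ^ 2 ≤ P ^ 2 := pow_le_pow_left₀ hMc hP 2
  have hP2' : P ^ 2 ≤ M ^ 2 := pow_le_pow_left₀ (hMc.trans hP) hP' 2
  have hPD : (M * c) ^ 2 * (M3 * c) - M ^ 2 * E ≤ P ^ 2 * D :=
    calc (M * c) ^ 2 * (M3 * c) - M ^ 2 * E ≤ P ^ 2 * (M3 * m) - P ^ 2 * E := by
          gcongr
      _ ≤ P ^ 2 * D := by nlinarith
  linarith [show (M * c) ^ 2 * (M3 * c) = M ^ 2 * M3 * c ^ 3 by ring]

lemma le_of_sub_mul_le_deriv {g g' : ℝ → ℝ} {A Λ t : ℝ} (hA : A ≠ 0)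
    (hg : ∀ s, 0 ≤ s → HasDerivAt g (g' s) s) (hg' : ∀ s, 0 ≤ s → Λ - A * g s ≤ g' s)
    (ht : 0 ≤ t) :
    g 0 * exp (-(A * t)) + Λ / A * (1 - exp (-(A * t))) ≤ g t := by
  have := le_gronwallBound_of_liminf_deriv_right_le (f := fun s => -g s) (f' := fun s => -g' s)
    (δ := -g 0) (K := -A) (ε := -Λ) (a := 0) (b := t)
    (fun s hs => (hg s hs.1).continuousAt.neg.continuousWithinAt)
    (fun s hs _ hr => (hg s hs.1).neg.hasDerivWithinAt.liminf_right_slope_le hr) le_rfl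
    (fun s hs => by linarith [hg' s hs.1]) t ⟨ht, le_rfl⟩
  simp only [gronwallBound_of_K_ne_0 (neg_ne_zero.mpr hA), sub_zero, neg_div_neg_eq,
    neg_mul] at this
  linarith

lemma two_mul_le_sInf_image_Ioi_sub_sSup_image_Iio {f : ℝ → ℝ} {x δ : ℝ}
    (hl : ∀ w < x, f w + δ ≤ f x) (hr : ∀ w, x < w → f x + δ ≤ f w) :
    2 * δ ≤ sInf (f '' Ioi x) - sSup (f '' Iio x) := by
  have hsup : sSup (f '' Iio x) ≤ f x - δ :=
    csSup_le ((nonempty_Iio).image f) <| forall_mem_image.mpr fun w hw => by linarith [hl w hw]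
  have hinf : f x + δ ≤ sInf (f '' Ioi x) :=
    le_csInf ((nonempty_Ioi).image f) <| forall_mem_image.mpr fun w hw => hr w hw
  linarith

lemma two_mul_div_mul_le_sInf_image_Ioi_sub_sSup_image_Iio {f w : ℝ → ℝ} {x E κ A D : ℝ}
    (hE : 0 ≤ E) (hκ : 0 ≤ κ) (hA : 0 ≤ A) (hD : 0 ≤ D)
    (hsep : ∀ u v, u < v → (v - u) * E + κ * max (w u) (w v) / A * D ≤ f v - f u) :
    2 * (κ * w x) / A * D ≤ sInf (f '' Ioi x) - sSup (f '' Iio x) := by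
  have hgap : ∀ u v, u < v → (u = x ∨ v = x) → f u + κ * w x / A * D ≤ f v := by
    intro u v huv hx
    have hmax : w x ≤ max (w u) (w v) := by rcases hx with rfl | rfl <;> simp
    have : κ * w x / A * D ≤ κ * max (w u) (w v) / A * D := by gcongr
    nlinarith [hsep u v huv, mul_nonneg (sub_pos.mpr huv).le hE]
  have := two_mul_le_sInf_image_Ioi_sub_sSup_image_Iio (fun u hu => hgap u x hu (.inr rfl))
    (fun v hv => hgap x v hv (.inl rfl))
  linarith [show 2 * (κ * w x) / A * D = 2 * (κ * w x / A * D) by ring]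

lemma measurable_iteratedDeriv_succ (n : ℕ) (g : ℝ → ℝ) : Measurable (iteratedDeriv (n + 1) g) := by
  rw [iteratedDeriv_succ]; exact measurable_deriv _

noncomputable def affineMulExp (α a b x : ℝ) : ℝ := (a + b * x) * exp (-x / α)

lemma deriv_affineMulExp {α : ℝ} (hα : α ≠ 0) (a b : ℝ) :
    deriv (affineMulExp α a b) = affineMulExp α (b - a / α) (-(b / α)) := by
  funext x
  have h : HasDerivAt (fun x => -x / α) (-1 / α) x := by
    simpa using (hasDerivAt_id x).neg.div_const α
  have : HasDerivAt (affineMulExp α a b)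
      (b * 1 * exp (-x / α) + (a + b * x) * (exp (-x / α) * (-1 / α))) x :=
    (((hasDerivAt_id x).const_mul b).const_add a).mul h.exp
  rw [this.deriv, affineMulExp]
  field_simp
  ring

variable {α : ℝ}

lemma biHelmholtzK_neg (x : ℝ) : biHelmholtzK α (-x) = biHelmholtzK α x := by
  simp [biHelmholtzK]

lemma biHelmholtzK_zero (hα : 0 < α) : biHelmholtzK α 0 = 1 / (4 * α) := by
  rw [biHelmholtzK, abs_zero, add_zero, neg_zero, zero_div, exp_zero, mul_one]
  field_simp

lemma biHelmholtzK_nonneg (hα : 0 < α) (x : ℝ) : 0 ≤ biHelmholtzK α x := by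
  unfold biHelmholtzK; positivity

lemma biHelmholtzK_le (hα : 0 < α) (x : ℝ) : biHelmholtzK α x ≤ 1 / (4 * α) := by
  calc biHelmholtzK α x = 1 / (4 * α ^ 2) * ((α + |x|) * exp (-|x| / α)) := by
        rw [biHelmholtzK, mul_assoc]
    _ ≤ 1 / (4 * α ^ 2) * α := by gcongr; exact add_mul_exp_neg_div_le hα _
    _ = 1 / (4 * α) := by field_simp

lemma continuous_biHelmholtzK : Continuous (biHelmholtzK α) := by
  unfold biHelmholtzK; fun_prop

lemma iteratedDeriv_three_biHelmholtzK_neg (u : ℝ) :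
    iteratedDeriv 3 (biHelmholtzK α) (-u) = -iteratedDeriv 3 (biHelmholtzK α) u := by
  have := iteratedDeriv_comp_neg 3 (biHelmholtzK α) (-u)
  simp only [biHelmholtzK_neg, neg_neg] at this
  rw [this]; norm_num

lemma iteratedDeriv_three_biHelmholtzK_zero : iteratedDeriv 3 (biHelmholtzK α) 0 = 0 := by
  have := iteratedDeriv_three_biHelmholtzK_neg (α := α) 0
  rw [neg_zero] at this
  linarith

lemma iteratedDeriv_three_biHelmholtzK_of_pos (hα : 0 < α) {u : ℝ} (hu : 0 < u) :
    iteratedDeriv 3 (biHelmholtzK α) u = (2 * α - u) * exp (-u / α) / (4 * α ^ 5) := by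
  have hK : biHelmholtzK α =ᶠ[𝓝 u] affineMulExp α (1 / (4 * α)) (1 / (4 * α ^ 2)) := by
    filter_upwards [Ioi_mem_nhds hu] with v hv
    rw [biHelmholtzK, affineMulExp, abs_of_pos (mem_Ioi.mp hv)]
    field_simp
  rw [hK.iteratedDeriv_eq, iteratedDeriv_succ, iteratedDeriv_succ, iteratedDeriv_one,
    deriv_affineMulExp hα.ne', deriv_affineMulExp hα.ne', deriv_affineMulExp hα.ne', affineMulExp]
  field_simp
  ring

lemma abs_iteratedDeriv_three_biHelmholtzK_le (hα : 0 < α) (u : ℝ) :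
    |iteratedDeriv 3 (biHelmholtzK α) u| ≤ 1 / (2 * α ^ 4) := by
  wlog hu : 0 ≤ u generalizing u
  · simpa [iteratedDeriv_three_biHelmholtzK_neg] using this (-u) (by linarith)
  rcases hu.eq_or_lt with rfl | hu
  · rw [iteratedDeriv_three_biHelmholtzK_zero, abs_zero]; positivity
  have h2 : |2 * α - u| * exp (-u / α) ≤ 2 * α := by
    calc |2 * α - u| * exp (-u / α) ≤ 2 * ((α + u) * exp (-u / α)) := by
          rw [← mul_assoc]; gcongr; rw [abs_le]; constructor <;> linarith
      _ ≤ 2 * α := by gcongr; exact add_mul_exp_neg_div_le hα u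
  rw [iteratedDeriv_three_biHelmholtzK_of_pos hα hu, abs_div, abs_mul, abs_exp,
    abs_of_pos (by positivity : (0:ℝ) < 4 * α ^ 5), div_le_iff₀ (by positivity)]
  calc |2 * α - u| * exp (-u / α) ≤ 2 * α := h2
    _ = 1 / (2 * α ^ 4) * (4 * α ^ 5) := by field_simp; ring

/-- The one-sided limit `K'''(0+) = 1/(2α⁴)` turns the Lipschitz bound on `(0, ∞)` into a
lower bound near `0`. -/
lemma sub_le_iteratedDeriv_three_biHelmholtzK (hα : 0 < α) {LK3 : ℝ}
    (hLK3 : ∀ a b : ℝ, 0 < a → 0 < b →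
      |iteratedDeriv 3 (biHelmholtzK α) a - iteratedDeriv 3 (biHelmholtzK α) b| ≤ LK3 * |a - b|)
    {u : ℝ} (hu : 0 < u) :
    1 / (2 * α ^ 4) - LK3 * u ≤ iteratedDeriv 3 (biHelmholtzK α) u := by
  set k : ℝ → ℝ := fun v => (2 * α - v) * exp (-v / α) / (4 * α ^ 5)
  have hk : Tendsto k (𝓝[>] 0) (𝓝 (1 / (2 * α ^ 4))) := by
    have : Continuous k := by fun_prop
    convert this.continuousWithinAt.tendsto using 2
    simp only [k, sub_zero, neg_zero, zero_div, exp_zero, mul_one]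
    field_simp
    ring
  have hdist : Tendsto (fun v => k v - LK3 * |u - v|) (𝓝[>] 0)
      (𝓝 (1 / (2 * α ^ 4) - LK3 * u)) := by
    refine hk.sub ?_
    have : Continuous fun v : ℝ => LK3 * |u - v| := by fun_prop
    simpa [abs_of_pos hu] using this.continuousWithinAt.tendsto (x := 0) (s := Ioi 0)
  refine le_of_tendsto hdist ?_
  filter_upwards [self_mem_nhdsWithin] with v (hv : 0 < v)
  have := hLK3 u v hu hv
  rw [iteratedDeriv_three_biHelmholtzK_of_pos hα hv] at this
  linarith [(abs_le.mp this).1]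

lemma sub_mul_le_iteratedDeriv_three_biHelmholtzK_sub_of_eq_zero (hα : 0 < α) {LK3 : ℝ}
    (hLK3 : ∀ a b : ℝ, 0 < a → 0 < b →
      |iteratedDeriv 3 (biHelmholtzK α) a - iteratedDeriv 3 (biHelmholtzK α) b| ≤ LK3 * |a - b|)
    {a b : ℝ} (hab : b < a) (h0 : a = 0 ∨ b = 0) :
    1 / (2 * α ^ 4) - LK3 * (a - b) ≤
      iteratedDeriv 3 (biHelmholtzK α) a - iteratedDeriv 3 (biHelmholtzK α) b := by
  rcases h0 with rfl | rfl
  · have := sub_le_iteratedDeriv_three_biHelmholtzK hα hLK3 (neg_pos.mpr hab)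
    rw [iteratedDeriv_three_biHelmholtzK_neg] at this
    rw [iteratedDeriv_three_biHelmholtzK_zero]
    linarith
  · have := sub_le_iteratedDeriv_three_biHelmholtzK hα hLK3 hab
    rw [iteratedDeriv_three_biHelmholtzK_zero]
    linarith

/-- `K'''` is odd, so across the origin the two one-sided bounds near `0` add up. -/
lemma neg_mul_le_iteratedDeriv_three_biHelmholtzK_sub (hα : 0 < α) {LK3 : ℝ}
    (hLK3 : ∀ a b : ℝ, 0 < a → 0 < b →
      |iteratedDeriv 3 (biHelmholtzK α) a - iteratedDeriv 3 (biHelmholtzK α) b| ≤ LK3 * |a - b|)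
    {a b : ℝ} (hab : b < a) :
    -(LK3 * (a - b)) ≤
      iteratedDeriv 3 (biHelmholtzK α) a - iteratedDeriv 3 (biHelmholtzK α) b := by
  have hM3 : (0 : ℝ) < 1 / (2 * α ^ 4) := by positivity
  rcases lt_trichotomy b 0 with hb | rfl | hb
  · rcases lt_trichotomy a 0 with ha | rfl | ha
    · have := hLK3 (-b) (-a) (neg_pos.mpr hb) (neg_pos.mpr ha)
      rw [iteratedDeriv_three_biHelmholtzK_neg, iteratedDeriv_three_biHelmholtzK_neg,
        show -b - -a = a - b by ring, abs_of_pos (sub_pos.mpr hab)] at this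
      linarith [(abs_le.mp this).1]
    · linarith [sub_mul_le_iteratedDeriv_three_biHelmholtzK_sub_of_eq_zero hα hLK3 hab (.inl rfl)]
    · have h1 := sub_le_iteratedDeriv_three_biHelmholtzK hα hLK3 ha
      have h2 := sub_le_iteratedDeriv_three_biHelmholtzK hα hLK3 (neg_pos.mpr hb)
      rw [iteratedDeriv_three_biHelmholtzK_neg] at h2
      linarith
  · linarith [sub_mul_le_iteratedDeriv_three_biHelmholtzK_sub_of_eq_zero hα hLK3 hab (.inr rfl)]
  · have := hLK3 a b (hb.trans hab) hb
    rw [abs_of_pos (sub_pos.mpr hab)] at this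
    linarith [(abs_le.mp this).1]

section Averages

variable {μ : Measure ℝ} {f : ℝ → ℝ}

lemma measureReal_le_one_of_measure_univ_le_one (hμ : μ univ ≤ 1) (s : Set ℝ) : μ.real s ≤ 1 :=
  ENNReal.toReal_le_of_le_ofReal zero_le_one
    ((measure_mono (subset_univ s)).trans (hμ.trans ENNReal.ofReal_one.ge))

lemma abs_integral_le_of_abs_le [IsFiniteMeasure μ] (hμ : μ univ ≤ 1) {g : ℝ → ℝ} {C : ℝ}
    (hg : ∀ z, |g z| ≤ C) :
    |∫ z, g z ∂μ| ≤ C := by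
  have hC : 0 ≤ C := (abs_nonneg _).trans (hg 0)
  calc |∫ z, g z ∂μ| ≤ C * μ.real univ :=
        norm_integral_le_of_norm_le_const (μ := μ) (f := g) (.of_forall hg)
    _ ≤ C := mul_le_of_le_one_right hC (measureReal_le_one_of_measure_univ_le_one hμ univ)

lemma integrable_comp_sub [IsFiniteMeasure μ] {g : ℝ → ℝ} {C : ℝ} (hg : Measurable g)
    (hgC : ∀ u, |g u| ≤ C) (hf : Measurable f) (p : ℝ) : Integrable (fun z => g (f p - f z)) μ :=
  .of_bound (hg.comp (measurable_const.sub hf)).aestronglyMeasurable C (.of_forall fun _ => hgC _)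

lemma integrable_biHelmholtzK_comp_sub [IsFiniteMeasure μ] (hα : 0 < α) (hf : Measurable f)
    (p : ℝ) :
    Integrable (fun z => biHelmholtzK α (f p - f z)) μ :=
  integrable_comp_sub continuous_biHelmholtzK.measurable
    (fun u => (abs_of_nonneg (biHelmholtzK_nonneg hα u)).trans_le (biHelmholtzK_le hα u)) hf p

lemma integrable_iteratedDeriv_three_biHelmholtzK_comp_sub [IsFiniteMeasure μ] (hα : 0 < α)
    (hf : Measurable f) (p : ℝ) :
    Integrable (fun z => iteratedDeriv 3 (biHelmholtzK α) (f p - f z)) μ :=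
  integrable_comp_sub (measurable_iteratedDeriv_succ 2 _)
    (abs_iteratedDeriv_three_biHelmholtzK_le hα) hf p

lemma integral_biHelmholtzK_nonneg (hα : 0 < α) (p : ℝ) :
    0 ≤ ∫ z, biHelmholtzK α (f p - f z) ∂μ :=
  integral_nonneg fun _ => biHelmholtzK_nonneg hα _

lemma integral_biHelmholtzK_le [IsFiniteMeasure μ] (hα : 0 < α) (hμ : μ univ ≤ 1) (p : ℝ) :
    ∫ z, biHelmholtzK α (f p - f z) ∂μ ≤ 1 / (4 * α) :=
  (le_abs_self _).trans <| abs_integral_le_of_abs_le (μ := μ) hμ fun _ =>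
    (abs_of_nonneg (biHelmholtzK_nonneg hα _)).trans_le (biHelmholtzK_le hα _)

lemma mul_measureReal_le_integral_biHelmholtzK [IsFiniteMeasure μ] (hα : 0 < α)
    (hf : Measurable f) (p : ℝ) :
    1 / (4 * α) * μ.real {p} ≤ ∫ z, biHelmholtzK α (f p - f z) ∂μ := by
  have := setIntegral_le_integral (s := {p}) (integrable_biHelmholtzK_comp_sub (μ := μ) hα hf p)
    (.of_forall fun _ => biHelmholtzK_nonneg hα _)
  rwa [integral_singleton, sub_self, biHelmholtzK_zero hα, smul_eq_mul, mul_comm] at this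

lemma abs_integral_biHelmholtzK_sub_le [IsFiniteMeasure μ] (hα : 0 < α) (hμ : μ univ ≤ 1) {LK : ℝ}
    (hLK : ∀ a b : ℝ, |biHelmholtzK α a - biHelmholtzK α b| ≤ LK * |a - b|)
    (hf : Measurable f) (x y : ℝ) :
    |∫ z, biHelmholtzK α (f y - f z) ∂μ - ∫ z, biHelmholtzK α (f x - f z) ∂μ| ≤
      LK * |f y - f x| := by
  rw [← integral_sub (integrable_biHelmholtzK_comp_sub hα hf y)
    (integrable_biHelmholtzK_comp_sub hα hf x)]
  refine abs_integral_le_of_abs_le hμ fun z => ?_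
  simpa using hLK (f y - f z) (f x - f z)

lemma abs_integral_iteratedDeriv_three_biHelmholtzK_le [IsFiniteMeasure μ] (hα : 0 < α)
    (hμ : μ univ ≤ 1) (p : ℝ) :
    |∫ z, iteratedDeriv 3 (biHelmholtzK α) (f p - f z) ∂μ| ≤ 1 / (2 * α ^ 4) :=
  abs_integral_le_of_abs_le hμ fun _ => abs_iteratedDeriv_three_biHelmholtzK_le hα _

/-- `K'''(0) = 0` (oddness), so the excluded point does not contribute. -/
lemma setIntegral_compl_singleton_iteratedDeriv_three_biHelmholtzK (p : ℝ) :
    ∫ z in {p}ᶜ, iteratedDeriv 3 (biHelmholtzK α) (f p - f z) ∂μ =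
      ∫ z, iteratedDeriv 3 (biHelmholtzK α) (f p - f z) ∂μ :=
  setIntegral_eq_integral_of_forall_compl_eq_zero fun z hz => by
    rw [not_not.mp hz, sub_self, iteratedDeriv_three_biHelmholtzK_zero]

lemma sub_le_integral_iteratedDeriv_three_biHelmholtzK_sub [IsFiniteMeasure μ] (hα : 0 < α)
    (hμ : μ univ ≤ 1) {LK3 : ℝ}
    (hLK3 : ∀ a b : ℝ, 0 < a → 0 < b →
      |iteratedDeriv 3 (biHelmholtzK α) a - iteratedDeriv 3 (biHelmholtzK α) b| ≤ LK3 * |a - b|)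
    (hf : Measurable f) {x y : ℝ} (hxy : f x < f y) :
    1 / (2 * α ^ 4) * μ.real {x, y} - LK3 * (f y - f x) ≤
      ∫ z, iteratedDeriv 3 (biHelmholtzK α) (f y - f z) ∂μ -
        ∫ z, iteratedDeriv 3 (biHelmholtzK α) (f x - f z) ∂μ := by
  have hLK3' : 0 ≤ LK3 := nonneg_of_abs_sub_le_mul_abs_sub (by norm_num) (hLK3 1 2 one_pos two_pos)
  have hxy' : 0 ≤ LK3 * (f y - f x) := mul_nonneg hLK3' (sub_nonneg.mpr hxy.le)
  have hpair : MeasurableSet ({x, y} : Set ℝ) := (measurableSet_singleton y).insert x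
  have hbound : ∀ z, ({x, y} : Set ℝ).indicator (fun _ => 1 / (2 * α ^ 4)) z - LK3 * (f y - f x) ≤
      iteratedDeriv 3 (biHelmholtzK α) (f y - f z) -
        iteratedDeriv 3 (biHelmholtzK α) (f x - f z) := by
    intro z
    have hab : f x - f z < f y - f z := by linarith
    have hdiff : (f y - f z) - (f x - f z) = f y - f x := by ring
    by_cases hz : z ∈ ({x, y} : Set ℝ)
    · rw [indicator_of_mem hz, ← hdiff]
      refine sub_mul_le_iteratedDeriv_three_biHelmholtzK_sub_of_eq_zero hα hLK3 hab ?_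
      rcases hz with rfl | rfl <;> simp
    · rw [indicator_of_notMem hz, zero_sub, ← hdiff]
      exact neg_mul_le_iteratedDeriv_three_biHelmholtzK_sub hα hLK3 hab
  have hind : Integrable (({x, y} : Set ℝ).indicator fun _ => 1 / (2 * α ^ 4)) μ :=
    (integrable_const _).indicator hpair
  have hy := integrable_iteratedDeriv_three_biHelmholtzK_comp_sub (μ := μ) hα hf y
  have hx := integrable_iteratedDeriv_three_biHelmholtzK_comp_sub (μ := μ) hα hf x
  calc 1 / (2 * α ^ 4) * μ.real {x, y} - LK3 * (f y - f x)
      ≤ ∫ z, (({x, y} : Set ℝ).indicator (fun _ => 1 / (2 * α ^ 4)) z - LK3 * (f y - f x)) ∂μ := by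
        rw [integral_sub hind (integrable_const _), integral_indicator_const _ hpair,
          integral_const, smul_eq_mul, smul_eq_mul]
        nlinarith [measureReal_le_one_of_measure_univ_le_one hμ univ,
          measureReal_nonneg (μ := μ) (s := univ)]
    _ ≤ ∫ z, (iteratedDeriv 3 (biHelmholtzK α) (f y - f z) -
          iteratedDeriv 3 (biHelmholtzK α) (f x - f z)) ∂μ :=
        integral_mono (hind.sub (integrable_const _)) (hy.sub hx) hbound
    _ = _ := integral_sub hy hx

/-- `f` stands for `c(·, t)`, and the right-hand side is `∂ₜ (c(y, t) - c(x, t))`. -/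
lemma sub_mul_le_velocity_sub [IsFiniteMeasure μ] (hα : 0 < α)
    (hμ : μ univ ≤ 1) {LK LK3 : ℝ}
    (hLK : ∀ a b : ℝ, |biHelmholtzK α a - biHelmholtzK α b| ≤ LK * |a - b|)
    (hLK3 : ∀ a b : ℝ, 0 < a → 0 < b →
      |iteratedDeriv 3 (biHelmholtzK α) a - iteratedDeriv 3 (biHelmholtzK α) b| ≤ LK3 * |a - b|)
    (hf : Measurable f) {x y : ℝ} (hxy : f x < f y) :
    (1 / (4 * α)) ^ 2 * (1 / (2 * α ^ 4)) * max (μ.real {x} ^ 3) (μ.real {y} ^ 3) -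
        2 * (1 / (4 * α)) * (2 * LK * (1 / (2 * α ^ 4)) + (1 / (4 * α)) * LK3) * (f y - f x) ≤
      (∫ z, biHelmholtzK α (f y - f z) ∂μ) ^ 2 *
          ∫ z in {y}ᶜ, iteratedDeriv 3 (biHelmholtzK α) (f y - f z) ∂μ -
        (∫ z, biHelmholtzK α (f x - f z) ∂μ) ^ 2 *
          ∫ z in {x}ᶜ, iteratedDeriv 3 (biHelmholtzK α) (f x - f z) ∂μ := by
  rw [setIntegral_compl_singleton_iteratedDeriv_three_biHelmholtzK,
    setIntegral_compl_singleton_iteratedDeriv_three_biHelmholtzK]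
  set M := 1 / (4 * α)
  set M3 := 1 / (2 * α ^ 4)
  set G := f y - f x
  set Hx := ∫ z, biHelmholtzK α (f x - f z) ∂μ
  set Hy := ∫ z, biHelmholtzK α (f y - f z) ∂μ
  set Ix := ∫ z, iteratedDeriv 3 (biHelmholtzK α) (f x - f z) ∂μ
  set Iy := ∫ z, iteratedDeriv 3 (biHelmholtzK α) (f y - f z) ∂μ
  have hM : 0 ≤ M := by positivity
  have hM3 : 0 ≤ M3 := by positivity
  have hG : 0 ≤ G := sub_nonneg.mpr hxy.le
  have hLK' : 0 ≤ LK := nonneg_of_abs_sub_le_mul_abs_sub one_ne_zero (hLK 1 0)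
  have hLK3' : 0 ≤ LK3 :=
    nonneg_of_abs_sub_le_mul_abs_sub (by norm_num) (hLK3 1 2 one_pos two_pos)
  have hE : 0 ≤ LK3 * G := mul_nonneg hLK3' hG
  have hHx : Hx ≤ M := integral_biHelmholtzK_le hα hμ x
  have hHy : Hy ≤ M := integral_biHelmholtzK_le hα hμ y
  have hHsq : |Hy ^ 2 - Hx ^ 2| ≤ 2 * M * (LK * G) := by
    have hsum : |Hy + Hx| ≤ 2 * M := by
      rw [abs_of_nonneg (add_nonneg (integral_biHelmholtzK_nonneg hα y)
        (integral_biHelmholtzK_nonneg hα x))]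
      linarith
    have hdiff := abs_integral_biHelmholtzK_sub_le (μ := μ) hα hμ hLK hf x y
    rw [abs_of_nonneg hG] at hdiff
    rw [show Hy ^ 2 - Hx ^ 2 = (Hy - Hx) * (Hy + Hx) by ring, abs_mul, mul_comm (2 * M)]
    exact mul_le_mul hdiff hsum (abs_nonneg _) (mul_nonneg hLK' hG)
  have hI := sub_le_integral_iteratedDeriv_three_biHelmholtzK_sub hα hμ hLK3 hf hxy
  have hAG : 2 * M * (LK * G) * M3 + M ^ 2 * (LK3 * G) ≤
      2 * M * (2 * LK * M3 + M * LK3) * G := by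
    nlinarith [mul_nonneg (mul_nonneg (mul_nonneg hM hLK') hG) hM3]
  rcases le_total (μ.real {x} ^ 3) (μ.real {y} ^ 3) with hmax | hmax
  · have := sub_le_mul_add_sq_mul hM hM3 hE measureReal_nonneg
      (measureReal_mono (by simp) : μ.real {y} ≤ μ.real {x, y})
      (mul_measureReal_le_integral_biHelmholtzK hα hf y) hHy hHsq
      (abs_integral_iteratedDeriv_three_biHelmholtzK_le (f := f) hα hμ x) hI
    rw [max_eq_right hmax]
    linarith [show Hy ^ 2 * Iy - Hx ^ 2 * Ix = (Hy ^ 2 - Hx ^ 2) * Ix + Hy ^ 2 * (Iy - Ix) by ring]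
  · have := sub_le_mul_add_sq_mul hM hM3 hE measureReal_nonneg
      (measureReal_mono (by simp) : μ.real {x} ≤ μ.real {x, y})
      (mul_measureReal_le_integral_biHelmholtzK hα hf x) hHx hHsq
      (abs_integral_iteratedDeriv_three_biHelmholtzK_le (f := f) hα hμ y) hI
    rw [max_eq_left hmax]
    linarith [show Hy ^ 2 * Iy - Hx ^ 2 * Ix = (Hy ^ 2 - Hx ^ 2) * Iy + Hx ^ 2 * (Iy - Ix) by ring]

end Averages

theorem stmt14_general (α : ℝ) (hα : 0 < α)
    (μ : Measure ℝ) [IsFiniteMeasure μ] (hμ : μ Set.univ ≤ 1)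
    (LK LK3 : ℝ)
    (hLK : ∀ a b : ℝ, |biHelmholtzK α a - biHelmholtzK α b| ≤ LK * |a - b|)
    (hLK3p : ∀ a b : ℝ, 0 < a → 0 < b →
      |iteratedDeriv 3 (biHelmholtzK α) a - iteratedDeriv 3 (biHelmholtzK α) b| ≤ LK3 * |a - b|)
    (A : ℝ)
    (hA : A = 2 * (1 / (4 * α)) * (2 * LK * (1 / (2 * α ^ 4)) + (1 / (4 * α)) * LK3))
    (hApos : 0 < A)
    (c : ℝ → ℝ → ℝ)
    (hinit : ∀ x : ℝ, c x 0 = x)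
    (hmono : ∀ t : ℝ, 0 ≤ t → StrictMono (fun x => c x t))
    (hode : ∀ x : ℝ, ∀ t : ℝ, 0 ≤ t →
      HasDerivAt (fun s => c x s)
        ((∫ z, biHelmholtzK α (c x t - c z t) ∂μ) ^ 2 *
          ∫ z in {x}ᶜ, iteratedDeriv 3 (biHelmholtzK α) (c x t - c z t) ∂μ) t) :
    (∀ x y : ℝ, x < y → ∀ t : ℝ, 0 ≤ t →
      (y - x) * Real.exp (-(A * t)) +
        ((1 / (4 * α)) ^ 2 * (1 / (2 * α ^ 4)) *
            max ((μ {x}).toReal ^ 3) ((μ {y}).toReal ^ 3) / A) *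
          (1 - Real.exp (-(A * t)))
        ≤ c y t - c x t) ∧
    (∀ x : ℝ, 0 < μ {x} → ∀ t : ℝ, 0 < t →
      0 < (2 * ((1 / (4 * α)) ^ 2 * (1 / (2 * α ^ 4)) * (μ {x}).toReal ^ 3) / A) *
            (1 - Real.exp (-(A * t))) ∧
      (2 * ((1 / (4 * α)) ^ 2 * (1 / (2 * α ^ 4)) * (μ {x}).toReal ^ 3) / A) *
            (1 - Real.exp (-(A * t)))
        ≤ sInf ((fun y => c y t) '' Set.Ioi x) - sSup ((fun y => c y t) '' Set.Iio x)) := by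
  have hsep : ∀ x y : ℝ, x < y → ∀ t : ℝ, 0 ≤ t →
      (y - x) * exp (-(A * t)) +
        ((1 / (4 * α)) ^ 2 * (1 / (2 * α ^ 4)) *
            max ((μ {x}).toReal ^ 3) ((μ {y}).toReal ^ 3) / A) * (1 - exp (-(A * t)))
        ≤ c y t - c x t := by
    intro x y hxy t ht
    simpa only [hinit] using le_of_sub_mul_le_deriv (g := fun s => c y s - c x s) hApos.ne'
      (fun s hs => (hode y s hs).sub (hode x s hs))
      (fun s hs => hA ▸ sub_mul_le_velocity_sub hα hμ hLK hLK3p (hmono s hs).monotone.measurable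
        (hmono s hs hxy)) ht
  refine ⟨hsep, fun x hx t ht => ?_⟩
  have hatom : 0 < (μ {x}).toReal := ENNReal.toReal_pos hx.ne' (measure_ne_top μ _)
  have hexp : 0 < 1 - exp (-(A * t)) := by
    rw [sub_pos, exp_lt_one_iff, neg_lt_zero]; exact mul_pos hApos ht
  exact ⟨by positivity, two_mul_div_mul_le_sInf_image_Ioi_sub_sSup_image_Iio (exp_pos _).le
    (by positivity) hApos.le hexp.le fun u v huv => hsep u v huv t ht.le⟩

/-- Lower separation estimate for characteristic curves:
`(y−x)e^{−At} + (Λ_{x,y}/A)(1−e^{−At}) ≤ c(y,t) − c(x,t)` where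
`Λ_{x,y} = ‖K‖_∞²‖K'''‖_∞ max{μ({x})³, μ({y})³}` with `‖K‖_∞ = 1/(4α)`,
`‖K'''‖_∞ = 1/(2α⁴)`. In particular curves never cross, and at an atom `x` of `μ`
the map `c(·,t)` has a jump of size at least `(2Λ_{x,x}/A)(1−e^{−At}) > 0` for `t > 0`. -/
theorem stmt14 (α : ℝ) (hα : 0 < α)
    (μ : Measure ℝ) [IsFiniteMeasure μ] (hμ : μ Set.univ ≤ 1)
    (LK LK3 : ℝ)
    (hLK : ∀ a b : ℝ, |biHelmholtzK α a - biHelmholtzK α b| ≤ LK * |a - b|)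
    (hLK3p : ∀ a b : ℝ, 0 < a → 0 < b →
      |iteratedDeriv 3 (biHelmholtzK α) a - iteratedDeriv 3 (biHelmholtzK α) b| ≤ LK3 * |a - b|)
    (hLK3m : ∀ a b : ℝ, a < 0 → b < 0 →
      |iteratedDeriv 3 (biHelmholtzK α) a - iteratedDeriv 3 (biHelmholtzK α) b| ≤ LK3 * |a - b|)
    (A : ℝ)
    (hA : A = 2 * (1 / (4 * α)) * (2 * LK * (1 / (2 * α ^ 4)) + (1 / (4 * α)) * LK3))
    (hApos : 0 < A)
    (c : ℝ → ℝ → ℝ)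
    (hinit : ∀ x : ℝ, c x 0 = x)
    (hmono : ∀ t : ℝ, 0 ≤ t → StrictMono (fun x => c x t))
    (hmeas : ∀ t : ℝ, 0 ≤ t → Measurable (fun x => c x t))
    (hode : ∀ x : ℝ, ∀ t : ℝ, 0 ≤ t →
      HasDerivAt (fun s => c x s)
        ((∫ z, biHelmholtzK α (c x t - c z t) ∂μ) ^ 2 *
          ∫ z in {x}ᶜ, iteratedDeriv 3 (biHelmholtzK α) (c x t - c z t) ∂μ) t) :
    (∀ x y : ℝ, x < y → ∀ t : ℝ, 0 ≤ t →
      (y - x) * Real.exp (-(A * t)) +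
        ((1 / (4 * α)) ^ 2 * (1 / (2 * α ^ 4)) *
            max ((μ {x}).toReal ^ 3) ((μ {y}).toReal ^ 3) / A) *
          (1 - Real.exp (-(A * t)))
        ≤ c y t - c x t) ∧
    (∀ x : ℝ, 0 < μ {x} → ∀ t : ℝ, 0 < t →
      0 < (2 * ((1 / (4 * α)) ^ 2 * (1 / (2 * α ^ 4)) * (μ {x}).toReal ^ 3) / A) *
            (1 - Real.exp (-(A * t))) ∧
      (2 * ((1 / (4 * α)) ^ 2 * (1 / (2 * α ^ 4)) * (μ {x}).toReal ^ 3) / A) *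
            (1 - Real.exp (-(A * t)))
        ≤ sInf ((fun y => c y t) '' Set.Ioi x) - sSup ((fun y => c y t) '' Set.Iio x)) :=
  stmt14_general α hα μ hμ LK LK3 hLK hLK3p A hA hApos c hinit hmono hode
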